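/- Under P_∞, the process {R_n − n}_{n≥1} is a zero-mean martingale with respect to the natural filtration F_n = σ(X₁, …, X_n); in particular E_∞ R_n = n for every n. -/

import Mathlib

/-!
Fix `k ≥ 1`. Under `P_∞` the estimate `θ_{i,k}` is `F_{i-1}`-measurable and `X_i` is independent of
`F_{i-1}` with density `f_{θ₀}`; freezing `F_{i-1}` and integrating out `X_i`, the factor
`f_{θ_{i,k}}(X_i)/f_{θ₀}(X_i)` has conditional mean `∫ f_{θ_{i,k}} = 1`. So `n ↦ Λ_{n,k}` is a
martingale for `n ≥ k - 1`, starting from the empty product `Λ_{k-1,k} = 1`. From `R_n` to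
`R_{n+1}` every term keeps its conditional mean and the new term `Λ_{n+1,n+1}` has conditional mean
`Λ_{n,n+1} = 1`; hence `R_n - n` is a martingale, and it starts from `R_0 - 0 = 0`.
-/

open MeasureTheory ProbabilityTheory Filter
open scoped ENNReal NNReal

noncomputable section

def gam (θ x : ℝ) : ℝ := gammaPDFReal θ 1 x

@[fun_prop]
theorem Real.measurable_Gamma : Measurable Real.Gamma :=
  measurable_of_tendsto_metrizable (fun n => by unfold Real.GammaSeq; fun_prop)
    (tendsto_pi_nhds.2 Real.GammaSeq_tendsto_Gamma)

theorem measurable_uncurry_gammaPDFReal (r : ℝ) :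
    Measurable fun p : ℝ × ℝ => gammaPDFReal p.1 r p.2 := by
  unfold gammaPDFReal
  exact Measurable.ite (measurableSet_le measurable_const measurable_snd) (by fun_prop)
    measurable_const

theorem ae_pos_gammaMeasure (a r : ℝ) : ∀ᵐ x ∂gammaMeasure a r, 0 < x := by
  have hIic : {x : ℝ | ¬0 < x} = Set.Iic 0 := by ext; simp
  rw [ae_iff, hIic, gammaMeasure, withDensity_apply _ measurableSet_Iic,
    Measure.restrict_congr_set Iio_ae_eq_Iic.symm]
  exact lintegral_gammaPDF_of_nonpos le_rfl

theorem lintegral_ofReal_div_withDensity {α : Type*} [MeasurableSpace α] {μ : Measure α}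
    {f g : α → ℝ} (hf : Measurable f) (hg : Measurable g) (hg0 : ∀ᵐ x ∂μ, 0 ≤ g x)
    (hfg : ∀ᵐ x ∂μ, g x = 0 → f x = 0) :
    ∫⁻ x, ENNReal.ofReal (f x / g x) ∂μ.withDensity (fun x => ENNReal.ofReal (g x)) =
      ∫⁻ x, ENNReal.ofReal (f x) ∂μ := by
  rw [lintegral_withDensity_eq_lintegral_mul _ hg.ennreal_ofReal
    (by fun_prop : Measurable fun x => ENNReal.ofReal (f x / g x))]
  refine lintegral_congr_ae ?_
  filter_upwards [hg0, hfg] with x hx hxf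
  rcases hx.eq_or_lt with h | h
  · simp [← h, hxf h.symm]
  · rw [Pi.mul_apply, ← ENNReal.ofReal_mul hx, mul_div_cancel₀ _ h.ne']

theorem lintegral_gammaPDFReal_div {a a₀ r : ℝ} (ha : 0 < a) (ha₀ : 0 < a₀) (hr : 0 < r) :
    ∫⁻ x, ENNReal.ofReal (gammaPDFReal a r x / gammaPDFReal a₀ r x) ∂gammaMeasure a₀ r = 1 := by
  rw [gammaMeasure, show gammaPDF a₀ r = fun x => ENNReal.ofReal (gammaPDFReal a₀ r x) from rfl,
    lintegral_ofReal_div_withDensity (measurable_gammaPDFReal a r)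
    (measurable_gammaPDFReal a₀ r) (.of_forall (gammaPDFReal_nonneg ha₀ hr))]
  · exact lintegral_gammaPDF_eq_one ha hr
  · filter_upwards [Measure.ae_ne volume 0] with x hx h0
    rcases hx.lt_or_gt with hx | hx
    · simp [gammaPDFReal, hx.not_ge]
    · exact absurd h0 (gammaPDFReal_pos ha₀ hr hx).ne'

section LikelihoodRatio

variable {Ω β γ : Type*} {m mΩ : MeasurableSpace Ω} [MeasurableSpace β] [MeasurableSpace γ]
  {P : Measure Ω}

theorem measurable_of_eq_biSup_comap {ι : Type*} {X : ι → Ω → γ} {s : Finset ι}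
    (h : m = ⨆ i ∈ s, MeasurableSpace.comap (X i) inferInstance) {i : ι} (hi : i ∈ s) :
    Measurable[m] (X i) := by
  subst h
  exact measurable_iff_comap_le.2 (le_biSup (fun i => MeasurableSpace.comap (X i) inferInstance) hi)

theorem indep_biSup_comap_of_notMem {ι : Type*} {X : ι → Ω → γ} (hX : ∀ i, Measurable (X i))
    (hind : iIndepFun X P) {s : Finset ι} {j : ι} (hj : j ∉ s) :
    Indep (⨆ i ∈ s, MeasurableSpace.comap (X i) inferInstance)
      (MeasurableSpace.comap (X j) inferInstance) P := by
  simpa using indep_iSup_of_disjoint (fun i => (hX i).comap_le) hind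
    (S := (s : Set ι)) (T := {j}) (Set.disjoint_singleton_right.2 hj)

theorem IndepFun.lintegral_comp_prodMk [IsFiniteMeasure P] {Z : Ω → β} {W : Ω → γ}
    (hZ : Measurable Z) (hW : Measurable W) (hind : IndepFun Z W P) {φ : β × γ → ℝ≥0∞}
    (hφ : Measurable φ) :
    ∫⁻ ω, φ (Z ω, W ω) ∂P = ∫⁻ ω, ∫⁻ y, φ (Z ω, y) ∂P.map W ∂P := by
  rw [← lintegral_map hφ (hZ.prodMk hW),
    (indepFun_iff_map_prod_eq_prod_map_map hZ.aemeasurable hW.aemeasurable).1 hind,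
    lintegral_prod _ hφ.aemeasurable, lintegral_map hφ.lintegral_prod_right' hZ]

variable [IsFiniteMeasure P] {θ : Ω → β} {W : Ω → γ} {ρ : β → γ → ℝ} {L : Ω → ℝ}

theorem lintegral_ofReal_mul_comp_eq (hm : m ≤ mΩ) (hθ : Measurable[m] θ) (hW : Measurable W)
    (hind : Indep m (MeasurableSpace.comap W inferInstance) P)
    (hρ : Measurable (Function.uncurry ρ))
    (hρ_one : ∀ᵐ ω ∂P, ∫⁻ y, ENNReal.ofReal (ρ (θ ω) y) ∂P.map W = 1)
    (hL : Measurable[m] L) (hL0 : ∀ᵐ ω ∂P, 0 ≤ L ω) :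
    ∫⁻ ω, ENNReal.ofReal (L ω * ρ (θ ω) (W ω)) ∂P = ∫⁻ ω, ENNReal.ofReal (L ω) ∂P := by
  have hZ : Measurable[m] fun ω => (L ω, θ ω) := hL.prodMk hθ
  have hφ : Measurable fun q : (ℝ × β) × γ => ENNReal.ofReal (q.1.1 * ρ q.1.2 q.2) :=
    (measurable_fst.fst.mul (hρ.comp (measurable_fst.snd.prodMk measurable_snd))).ennreal_ofReal
  rw [IndepFun.lintegral_comp_prodMk (hZ.mono hm le_rfl) hW
    (indep_of_indep_of_le_left hind hZ.comap_le) hφ]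
  refine lintegral_congr_ae ?_
  filter_upwards [hL0, hρ_one] with ω hLω hρω
  simp_rw [ENNReal.ofReal_mul hLω]
  rw [lintegral_const_mul _ hρ.of_uncurry_left.ennreal_ofReal, hρω, mul_one]

theorem integrable_mul_comp (hm : m ≤ mΩ) (hθ : Measurable[m] θ) (hW : Measurable W)
    (hind : Indep m (MeasurableSpace.comap W inferInstance) P)
    (hρ : Measurable (Function.uncurry ρ)) (hρ_nonneg : ∀ᵐ ω ∂P, 0 ≤ ρ (θ ω) (W ω))
    (hρ_one : ∀ᵐ ω ∂P, ∫⁻ y, ENNReal.ofReal (ρ (θ ω) y) ∂P.map W = 1)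
    (hL : Measurable[m] L) (hL0 : ∀ᵐ ω ∂P, 0 ≤ L ω) (hLint : Integrable L P) :
    Integrable (fun ω => L ω * ρ (θ ω) (W ω)) P := by
  refine ⟨((hL.mono hm le_rfl).mul
    (hρ.comp ((hθ.mono hm le_rfl).prodMk hW))).aestronglyMeasurable, ?_⟩
  have h0 : ∀ᵐ ω ∂P, 0 ≤ L ω * ρ (θ ω) (W ω) := by
    filter_upwards [hL0, hρ_nonneg] with ω h1 h2 using mul_nonneg h1 h2
  rw [hasFiniteIntegral_iff_ofReal h0, lintegral_ofReal_mul_comp_eq hm hθ hW hind hρ hρ_one hL hL0]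
  exact (hasFiniteIntegral_iff_ofReal hL0).1 hLint.2

theorem condExp_mul_comp_ae_eq (hm : m ≤ mΩ) (hθ : Measurable[m] θ) (hW : Measurable W)
    (hind : Indep m (MeasurableSpace.comap W inferInstance) P)
    (hρ : Measurable (Function.uncurry ρ)) (hρ_nonneg : ∀ᵐ ω ∂P, 0 ≤ ρ (θ ω) (W ω))
    (hρ_one : ∀ᵐ ω ∂P, ∫⁻ y, ENNReal.ofReal (ρ (θ ω) y) ∂P.map W = 1)
    (hL : Measurable[m] L) (hL0 : ∀ᵐ ω ∂P, 0 ≤ L ω) (hLint : Integrable L P) :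
    P[fun ω => L ω * ρ (θ ω) (W ω) | m] =ᵐ[P] L := by
  refine (ae_eq_condExp_of_forall_setIntegral_eq hm
    (integrable_mul_comp hm hθ hW hind hρ hρ_nonneg hρ_one hL hL0 hLint)
    (fun s _ _ => hLint.integrableOn) (fun s hs _ => ?_) hL.aestronglyMeasurable).symm
  have hG : Measurable[m] (s.indicator L) := hL.indicator hs
  have hG0 : ∀ᵐ ω ∂P, 0 ≤ s.indicator L ω := by
    filter_upwards [hL0] with ω hω using Set.indicator_nonneg (fun _ _ => hω) ω
  have hGρ0 : ∀ᵐ ω ∂P, 0 ≤ s.indicator L ω * ρ (θ ω) (W ω) := by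
    filter_upwards [hG0, hρ_nonneg] with ω h1 h2 using mul_nonneg h1 h2
  rw [← integral_indicator (hm s hs), ← integral_indicator (hm s hs),
    funext fun ω => Set.indicator_mul_left s L (fun ω => ρ (θ ω) (W ω)) (i := ω),
    integral_eq_lintegral_of_nonneg_ae hGρ0 ((hG.mono hm le_rfl).mul
      (hρ.comp ((hθ.mono hm le_rfl).prodMk hW))).aestronglyMeasurable,
    integral_eq_lintegral_of_nonneg_ae hG0 (hG.mono hm le_rfl).aestronglyMeasurable,
    lintegral_ofReal_mul_comp_eq hm hθ hW hind hρ hρ_one hG hG0]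

end LikelihoodRatio

section ShiryaevRoberts

variable {Ω β γ : Type*} {mΩ : MeasurableSpace Ω} {P : Measure Ω} {F : Filtration ℕ mΩ}

/-- The paper's `Λ_{n,k}` is `likelihoodRatioProd ρ θ X k n` with `ρ a x = f_a(x) / f_{θ₀}(x)`. -/
def likelihoodRatioProd (ρ : β → γ → ℝ) (θ : ℕ → ℕ → Ω → β) (X : ℕ → Ω → γ) (k n : ℕ)
    (ω : Ω) : ℝ :=
  ∏ i ∈ Finset.Icc k n, ρ (θ k i ω) (X i ω)

theorem martingale_sum_Icc_sub_natCast [IsFiniteMeasure P] {Λ : ℕ → ℕ → Ω → ℝ}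
    (hmeas : ∀ k n, 0 < k → Measurable[F n] (Λ k n))
    (hint : ∀ k n, 0 < k → Integrable (Λ k n) P)
    (hstep : ∀ k n, 0 < k → k ≤ n + 1 → P[Λ k (n + 1) | F n] =ᵐ[P] Λ k n)
    (hone : ∀ n, Λ (n + 1) n = 1) :
    Martingale (fun n ω => ∑ k ∈ Finset.Icc 1 n, Λ k n ω - n) F P := by
  have hpos {k n : ℕ} (hk : k ∈ Finset.Icc 1 n) : 0 < k := (Finset.mem_Icc.1 hk).1
  have hsum (n : ℕ) : (fun ω => ∑ k ∈ Finset.Icc 1 n, Λ k n ω - n) =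
      (∑ k ∈ Finset.Icc 1 n, Λ k n) - fun _ => (n : ℝ) := by
    ext ω; simp [Finset.sum_apply]
  refine martingale_nat (fun n => ?_) (fun n => ?_) (fun n => ?_)
  · exact ((Finset.measurable_sum _ fun k hk => hmeas k n (hpos hk)).sub_const _).stronglyMeasurable
  · exact (integrable_finsetSum _ fun k hk => hint k n (hpos hk)).sub (integrable_const _)
  have hint' : ∀ k ∈ Finset.Icc 1 (n + 1), Integrable (Λ k (n + 1)) P :=
    fun k hk => hint k (n + 1) (hpos hk)
  have hstep' : ∀ᵐ ω ∂P, ∀ k ∈ Finset.Icc 1 (n + 1), (P[Λ k (n + 1) | F n]) ω = Λ k n ω :=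
    (Finset.eventually_all _).2 fun k hk => hstep k n (hpos hk) (Finset.mem_Icc.1 hk).2
  rw [hsum (n + 1)]
  filter_upwards [condExp_sub (integrable_finsetSum' _ hint') (integrable_const _) (F n),
    condExp_finsetSum hint' (F n), hstep'] with ω hsub hfin hω
  rw [hsub, Pi.sub_apply, hfin, condExp_const (F.le n), Finset.sum_apply,
    Finset.sum_congr rfl hω, Finset.sum_Icc_succ_top (Nat.le_add_left 1 n), hone, Pi.one_apply]
  push_cast
  ring

theorem integral_sum_Icc_eq_natCast [IsProbabilityMeasure P] {Λ : ℕ → ℕ → Ω → ℝ}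
    (hmart : Martingale (fun n ω => ∑ k ∈ Finset.Icc 1 n, Λ k n ω - n) F P) (n : ℕ) :
    ∫ ω, ∑ k ∈ Finset.Icc 1 n, Λ k n ω ∂P = n := by
  have h := hmart.setIntegral_eq (Nat.zero_le n) MeasurableSet.univ
  have hint : Integrable (fun ω => ∑ k ∈ Finset.Icc 1 n, Λ k n ω) P := by
    simpa [sub_eq_add_neg] using integrable_add_const_iff.1 (hmart.integrable n)
  simp [integral_sub hint (integrable_const _)] at h
  linarith

variable {ρ : β → γ → ℝ} {θ : ℕ → ℕ → Ω → β} {X : ℕ → Ω → γ} {k : ℕ}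

theorem likelihoodRatioProd_of_lt {n : ℕ} (h : n < k) : likelihoodRatioProd ρ θ X k n = 1 := by
  ext ω; simp [likelihoodRatioProd, Finset.Icc_eq_empty_of_lt h]

theorem likelihoodRatioProd_succ {n : ℕ} (h : k ≤ n + 1) (ω : Ω) :
    likelihoodRatioProd ρ θ X k (n + 1) ω =
      likelihoodRatioProd ρ θ X k n ω * ρ (θ k (n + 1) ω) (X (n + 1) ω) :=
  Finset.prod_Icc_succ_top h _

theorem ae_nonneg_likelihoodRatioProd (hρ_nonneg : ∀ i, k ≤ i → ∀ᵐ ω ∂P, 0 ≤ ρ (θ k i ω) (X i ω))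
    (n : ℕ) : ∀ᵐ ω ∂P, 0 ≤ likelihoodRatioProd ρ θ X k n ω := by
  filter_upwards [(Finset.eventually_all (Finset.Icc k n)).2
    fun i hi => hρ_nonneg i (Finset.mem_Icc.1 hi).1] with ω hω
  exact Finset.prod_nonneg hω

variable [MeasurableSpace β] [MeasurableSpace γ]

theorem measurable_likelihoodRatioProd (hk : 0 < k) (hX : ∀ i, k ≤ i → Measurable[F i] (X i))
    (hθ : ∀ n, k ≤ n + 1 → Measurable[F n] (θ k (n + 1))) (hρ : Measurable (Function.uncurry ρ))
    (n : ℕ) : Measurable[F n] (likelihoodRatioProd ρ θ X k n) := by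
  refine Finset.measurable_prod _ fun i hi => hρ.comp (Measurable.prodMk ?_ ?_)
  · obtain ⟨hki, hin⟩ := Finset.mem_Icc.1 hi
    obtain ⟨j, rfl⟩ : ∃ j, i = j + 1 := ⟨i - 1, by omega⟩
    exact (hθ j hki).mono (F.mono (by omega)) le_rfl
  · exact (hX i (Finset.mem_Icc.1 hi).1).mono (F.mono (Finset.mem_Icc.1 hi).2) le_rfl

variable [IsFiniteMeasure P]

theorem integrable_likelihoodRatioProd (hk : 0 < k) (hX : ∀ i, k ≤ i → Measurable[F i] (X i))
    (hθ : ∀ n, k ≤ n + 1 → Measurable[F n] (θ k (n + 1)))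
    (hind : ∀ n, k ≤ n + 1 → Indep (F n) (MeasurableSpace.comap (X (n + 1)) inferInstance) P)
    (hρ : Measurable (Function.uncurry ρ))
    (hρ_nonneg : ∀ i, k ≤ i → ∀ᵐ ω ∂P, 0 ≤ ρ (θ k i ω) (X i ω))
    (hρ_one : ∀ i, k ≤ i → ∀ᵐ ω ∂P, ∫⁻ y, ENNReal.ofReal (ρ (θ k i ω) y) ∂P.map (X i) = 1)
    (n : ℕ) : Integrable (likelihoodRatioProd ρ θ X k n) P := by
  induction n with
  | zero => rw [likelihoodRatioProd_of_lt hk]; exact integrable_const 1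
  | succ n ih =>
    by_cases h : k ≤ n + 1
    · rw [funext (likelihoodRatioProd_succ h)]
      exact integrable_mul_comp (F.le n) (hθ n h) ((hX _ h).mono (F.le _) le_rfl) (hind n h) hρ
        (hρ_nonneg _ h) (hρ_one _ h) (measurable_likelihoodRatioProd hk hX hθ hρ n)
        (ae_nonneg_likelihoodRatioProd hρ_nonneg n) ih
    · rw [likelihoodRatioProd_of_lt (not_le.1 h)]
      exact integrable_const 1

theorem condExp_likelihoodRatioProd_succ (hk : 0 < k)
    (hX : ∀ i, k ≤ i → Measurable[F i] (X i))
    (hθ : ∀ n, k ≤ n + 1 → Measurable[F n] (θ k (n + 1)))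
    (hind : ∀ n, k ≤ n + 1 → Indep (F n) (MeasurableSpace.comap (X (n + 1)) inferInstance) P)
    (hρ : Measurable (Function.uncurry ρ))
    (hρ_nonneg : ∀ i, k ≤ i → ∀ᵐ ω ∂P, 0 ≤ ρ (θ k i ω) (X i ω))
    (hρ_one : ∀ i, k ≤ i → ∀ᵐ ω ∂P, ∫⁻ y, ENNReal.ofReal (ρ (θ k i ω) y) ∂P.map (X i) = 1)
    {n : ℕ} (h : k ≤ n + 1) :
    P[likelihoodRatioProd ρ θ X k (n + 1) | F n] =ᵐ[P] likelihoodRatioProd ρ θ X k n := by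
  rw [funext (likelihoodRatioProd_succ h)]
  exact condExp_mul_comp_ae_eq (F.le n) (hθ n h) ((hX _ h).mono (F.le _) le_rfl) (hind n h) hρ
    (hρ_nonneg _ h) (hρ_one _ h) (measurable_likelihoodRatioProd hk hX hθ hρ n)
    (ae_nonneg_likelihoodRatioProd hρ_nonneg n)
    (integrable_likelihoodRatioProd hk hX hθ hind hρ hρ_nonneg hρ_one n)

theorem martingale_sum_likelihoodRatioProd_sub_natCast {ν : Measure γ} {S : Set β}
    (hX : ∀ i, 0 < i → Measurable[F i] (X i))
    (hind : ∀ n, Indep (F n) (MeasurableSpace.comap (X (n + 1)) inferInstance) P)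
    (hlaw : ∀ i, 0 < i → P.map (X i) = ν)
    (hθ : ∀ k n, 0 < k → k ≤ n + 1 → Measurable[F n] (θ k (n + 1)))
    (hθS : ∀ k i, 0 < k → k ≤ i → ∀ᵐ ω ∂P, θ k i ω ∈ S)
    (hρ : Measurable (Function.uncurry ρ)) (hρ_nonneg : ∀ a ∈ S, ∀ y, 0 ≤ ρ a y)
    (hρ_one : ∀ a ∈ S, ∫⁻ y, ENNReal.ofReal (ρ a y) ∂ν = 1) :
    Martingale (fun n ω => ∑ k ∈ Finset.Icc 1 n, likelihoodRatioProd ρ θ X k n ω - n) F P := by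
  have hXk (k : ℕ) (hk : 0 < k) (i : ℕ) (hi : k ≤ i) : Measurable[F i] (X i) :=
    hX i (hk.trans_le hi)
  have hρk_nonneg (k : ℕ) (hk : 0 < k) (i : ℕ) (hi : k ≤ i) :
      ∀ᵐ ω ∂P, 0 ≤ ρ (θ k i ω) (X i ω) := by
    filter_upwards [hθS k i hk hi] with ω hω using hρ_nonneg _ hω _
  have hρk_one (k : ℕ) (hk : 0 < k) (i : ℕ) (hi : k ≤ i) :
      ∀ᵐ ω ∂P, ∫⁻ y, ENNReal.ofReal (ρ (θ k i ω) y) ∂P.map (X i) = 1 := by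
    filter_upwards [hθS k i hk hi] with ω hω
    rw [hlaw i (hk.trans_le hi), hρ_one _ hω]
  exact martingale_sum_Icc_sub_natCast
    (fun k n hk => measurable_likelihoodRatioProd hk (hXk k hk) (hθ k · hk) hρ n)
    (fun k n hk => integrable_likelihoodRatioProd hk (hXk k hk) (hθ k · hk) (fun n _ => hind n) hρ
      (hρk_nonneg k hk) (hρk_one k hk) n)
    (fun k n hk h => condExp_likelihoodRatioProd_succ hk (hXk k hk) (hθ k · hk)
      (fun n _ => hind n) hρ (hρk_nonneg k hk) (hρk_one k hk) h)
    (fun n => likelihoodRatioProd_of_lt n.lt_succ_self)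

end ShiryaevRoberts

section RunningMean

variable {Ω : Type*} {mΩ : MeasurableSpace Ω} {X : ℕ → Ω → ℝ} {θ : ℕ → ℕ → Ω → ℝ} {c s t : ℝ}
  {k : ℕ}

theorem measurable_runningMean_succ {F : Filtration ℕ mΩ}
    (hX : ∀ i n, 0 < i → i ≤ n → Measurable[F n] (X i)) (hθkk : ∀ k ω, θ k k ω = c)
    (hθnk : ∀ k n ω, k < n →
      θ k n ω = ((∑ i ∈ Finset.Ico k n, X i ω) + s) / (((n : ℝ) - (k : ℝ)) + t))
    (hk : 0 < k) {n : ℕ} (hkn : k ≤ n + 1) : Measurable[F n] (θ k (n + 1)) := by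
  rcases hkn.eq_or_lt with rfl | hkn
  · simp only [funext (hθkk (n + 1)), measurable_const]
  rw [show θ k (n + 1) = _ from funext fun ω => hθnk k (n + 1) ω hkn]
  refine ((Finset.measurable_sum _ fun i hi => hX i n ?_ ?_).add_const s).div_const _ <;>
    simp only [Finset.mem_Ico] at hi <;> omega

theorem ae_pos_runningMean {P : Measure Ω} (hX : ∀ i, 0 < i → ∀ᵐ ω ∂P, 0 < X i ω) (hc : 0 < c)
    (hs : 0 ≤ s) (ht : 0 ≤ t) (hθkk : ∀ k ω, θ k k ω = c)
    (hθnk : ∀ k n ω, k < n →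
      θ k n ω = ((∑ i ∈ Finset.Ico k n, X i ω) + s) / (((n : ℝ) - (k : ℝ)) + t))
    (hk : 0 < k) {i : ℕ} (hki : k ≤ i) : ∀ᵐ ω ∂P, 0 < θ k i ω := by
  rcases hki.eq_or_lt with rfl | hki
  · exact .of_forall fun ω => hθkk k ω ▸ hc
  filter_upwards [(Finset.eventually_all _).2 fun j hj =>
    hX j (hk.trans_le (Finset.mem_Ico.1 hj).1)] with ω hω
  have hsum := Finset.sum_pos hω ⟨k, Finset.mem_Ico.2 ⟨le_rfl, hki⟩⟩
  have hki' : (k : ℝ) < i := by exact_mod_cast hki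
  rw [hθnk k i ω hki]
  exact div_pos (by linarith) (by linarith)

end RunningMean

/-- under `P_∞`, the process `{R_n − n}` is a zero-mean martingale with
respect to the natural filtration `F_n = σ(X₁,…,X_n)`; in particular `E_∞ R_n = n` for
every `n`. -/
theorem srrs_martingale
    {Ω : Type*} [mΩ : MeasurableSpace Ω] (P : Measure Ω) [IsProbabilityMeasure P]
    (θ₀ : ℝ) (hθ₀ : 0 < θ₀)
    (X : ℕ → Ω → ℝ) (hXmeas : ∀ i, Measurable (X i))
    (hindep : iIndepFun X P)
    (hlaw : ∀ i, 1 ≤ i → Measure.map (X i) P = gammaMeasure θ₀ 1)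
    (s t : ℝ) (hs : 0 ≤ s) (ht : 0 ≤ t)
    (θnk : ℕ → ℕ → Ω → ℝ)
    (hθkk : ∀ k ω, θnk k k ω = if s = 0 ∨ t = 0 then θ₀ else s / t)
    (hθnk : ∀ k n ω, k < n →
      θnk k n ω = ((∑ i ∈ Finset.Ico k n, X i ω) + s) / (((n : ℝ) - (k : ℝ)) + t))
    (Λ : ℕ → ℕ → Ω → ℝ)
    (hΛ : ∀ k n ω, Λ k n ω = ∏ i ∈ Finset.Icc k n, gam (θnk k i ω) (X i ω) / gam θ₀ (X i ω))
    (R : ℕ → Ω → ℝ) (hR : ∀ n ω, R n ω = ∑ k ∈ Finset.Icc 1 n, Λ k n ω)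
    -- the natural filtration F_n = σ(X₁,…,X_n)
    (F : Filtration ℕ mΩ)
    (hF : ∀ n, (F n : MeasurableSpace Ω)
      = ⨆ i ∈ Finset.Icc 1 n, MeasurableSpace.comap (X i) inferInstance) :
    Martingale (fun n ω => R n ω - (n : ℝ)) F P ∧
      ∀ n : ℕ, ∫ ω, R n ω ∂P = (n : ℝ) := by
  have hXF (i n : ℕ) (hi : 0 < i) (hin : i ≤ n) : Measurable[F n] (X i) :=
    measurable_of_eq_biSup_comap (hF n) (Finset.mem_Icc.2 ⟨hi, hin⟩)
  have hXpos (i : ℕ) (hi : 0 < i) : ∀ᵐ ω ∂P, 0 < X i ω :=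
    ae_of_ae_map (hXmeas i).aemeasurable (hlaw i hi ▸ ae_pos_gammaMeasure θ₀ 1)
  have hθkk_pos : 0 < if s = 0 ∨ t = 0 then θ₀ else s / t := by
    split_ifs with h
    · exact hθ₀
    · obtain ⟨hs0, ht0⟩ := not_or.1 h
      exact div_pos (hs.lt_of_ne' hs0) (ht.lt_of_ne' ht0)
  have hmart := martingale_sum_likelihoodRatioProd_sub_natCast (ρ := fun a x => gam a x / gam θ₀ x)
    (fun i hi => hXF i i hi le_rfl)
    (fun n => hF n ▸ indep_biSup_comap_of_notMem hXmeas hindep (by simp)) hlaw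
    (fun k n hk => measurable_runningMean_succ hXF hθkk hθnk hk)
    (fun k i hk => ae_pos_runningMean hXpos hθkk_pos hs ht hθkk hθnk hk)
    ((measurable_uncurry_gammaPDFReal 1).div ((measurable_gammaPDFReal θ₀ 1).comp measurable_snd))
    (fun a ha y => div_nonneg (gammaPDFReal_nonneg ha one_pos y)
      (gammaPDFReal_nonneg hθ₀ one_pos y))
    (fun a ha => lintegral_gammaPDFReal_div ha hθ₀ one_pos)
  obtain rfl : R = fun n ω => ∑ k ∈ Finset.Icc 1 n,
      likelihoodRatioProd (fun a x => gam a x / gam θ₀ x) θnk X k n ω := by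
    ext n ω; rw [hR]; exact Finset.sum_congr rfl fun k _ => hΛ k n ω
  exact ⟨hmart, integral_sum_Icc_eq_natCast hmart⟩
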